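/- Suppose b > d (so that x̄ = 0 is an unstable equilibrium of the uncontrolled replicator equation). Let φ : ℝ → ℝ be continuously differentiable, and let (x, g) be a solution of the innovation-gain controlled replicator equation with x(0) ∈ (0,1) and g(0) > 0. If g(t) converges to a finite limit ḡ ∈ ℝ as t → ∞, then x(t) does not converge to 0 as t → ∞. -/
import Mathlib


/-- `(x, g)` is a solution of the innovation-gain controlled replicator equation
(control matrix `G⁽³⁾`): `ẋ = x(1−x)((a+d−b−c)x + b − d − g·x)`, `ġ = φ(x) g`. -/
def IsInnovationSolution (a b c d : ℝ) (φ : ℝ → ℝ) (x g : ℝ → ℝ) : Prop :=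
  ∀ t : ℝ, 0 ≤ t →
    HasDerivAt x
      (x t * (1 - x t) * ((a + d - b - c) * x t + (b - d) - g t * x t)) t ∧
    HasDerivAt g (φ (x t) * g t) t

/-- The innovation-gain controller cannot stabilize the unstable consensus `xbar = 0`
(when `b > d`) with a gain converging to a finite limit. -/
theorem innovation_cannot_stabilize (a b c d : ℝ) (hbd : b > d)
    (φ : ℝ → ℝ) (hφ : ContDiff ℝ 1 φ)
    (x g : ℝ → ℝ) (hsol : IsInnovationSolution a b c d φ x g)
    (hx0 : x 0 ∈ Set.Ioo (0 : ℝ) 1) (hg0 : 0 < g 0)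
    (gbar : ℝ) (hgain : Filter.Tendsto g Filter.atTop (nhds gbar)) :
    ¬ Filter.Tendsto x Filter.atTop (nhds 0) := by
  intro hcontra
  obtain ⟨x0pos, _x0lt⟩ := hx0
  set h : ℝ → ℝ := fun t => (1 - x t) * ((a + d - b - c) * x t + (b - d) - g t * x t)
    with hh
  have hderiv : ∀ t, 0 ≤ t → HasDerivAt x (x t * h t) t := by
    intro t ht
    have h1 := (hsol t ht).1
    have e : x t * (1 - x t) * ((a + d - b - c) * x t + (b - d) - g t * x t)
        = x t * h t := by rw [hh]; ring
    rwa [e] at h1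
  have hxc : ContinuousOn x (Set.Ici (0 : ℝ)) :=
    fun t ht => ((hsol t ht).1.continuousAt).continuousWithinAt
  have hgc : ContinuousOn g (Set.Ici (0 : ℝ)) :=
    fun t ht => ((hsol t ht).2.continuousAt).continuousWithinAt
  have hhc : ContinuousOn h (Set.Ici (0 : ℝ)) := by
    rw [hh]
    exact (continuousOn_const.sub hxc).mul
      (((continuousOn_const.mul hxc).add continuousOn_const).sub (hgc.mul hxc))
  -- x stays positive on [0, ∞)
  have hpos : ∀ t, 0 ≤ t → 0 < x t := by
    by_contra hc
    push_neg at hc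
    obtain ⟨t2, ht2, hxt2⟩ := hc
    -- find a zero of x by IVT
    have hsub2 : Set.Icc (0 : ℝ) t2 ⊆ Set.Ici (0 : ℝ) := fun s hs => hs.1
    have hivt := intermediate_value_Icc' ht2 (hxc.mono hsub2)
    have h0mem : (0 : ℝ) ∈ Set.Icc (x t2) (x 0) := ⟨hxt2, le_of_lt x0pos⟩
    obtain ⟨t1, ht1, hxt1⟩ := hivt h0mem
    have ht1a : (0 : ℝ) ≤ t1 := ht1.1
    -- backward Gronwall on [0, t1] with y s = x (t1 - s)
    set y : ℝ → ℝ := fun s => x (t1 - s) with hy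
    have hsub : Set.Icc (0 : ℝ) t1 ⊆ Set.Ici (0 : ℝ) := fun s hs => hs.1
    obtain ⟨K, hK⟩ : ∃ K, ∀ s ∈ Set.Icc (0 : ℝ) t1, ‖h s‖ ≤ K :=
      isCompact_Icc.exists_bound_of_continuousOn (hhc.mono hsub)
    have hyc : ContinuousOn y (Set.Icc 0 t1) := by
      apply hxc.comp (continuousOn_const.sub continuousOn_id)
      intro s hs
      exact Set.mem_Ici.2 (by simp; linarith [hs.2])
    have hy' : ∀ s ∈ Set.Ico (0 : ℝ) t1,
        HasDerivWithinAt y (-(x (t1 - s) * h (t1 - s))) (Set.Ici s) s := by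
      intro s hs
      have hts : (0 : ℝ) ≤ t1 - s := by linarith [hs.2]
      have h1 : HasDerivAt x (x (t1 - s) * h (t1 - s)) (t1 - s) := hderiv _ hts
      have h2 : HasDerivAt (fun s : ℝ => t1 - s) (-1) s := (hasDerivAt_id s).const_sub t1
      have h3 := h1.comp s h2
      have e : x (t1 - s) * h (t1 - s) * (-1) = -(x (t1 - s) * h (t1 - s)) := by ring
      rw [e] at h3
      exact (h3 : HasDerivAt y _ s).hasDerivWithinAt
    have hbound : ∀ s ∈ Set.Ico (0 : ℝ) t1,
        ‖-(x (t1 - s) * h (t1 - s))‖ ≤ K * ‖y s‖ + 0 := by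
      intro s hs
      have hts : t1 - s ∈ Set.Icc (0 : ℝ) t1 := ⟨by linarith [hs.2], by linarith [hs.1]⟩
      have := hK _ hts
      rw [norm_neg, norm_mul]
      calc ‖x (t1 - s)‖ * ‖h (t1 - s)‖ ≤ ‖x (t1 - s)‖ * K :=
            mul_le_mul_of_nonneg_left this (norm_nonneg _)
        _ = K * ‖y s‖ + 0 := by simp [hy, mul_comm]
    have ha : ‖y 0‖ ≤ 0 := by simp [hy, hxt1]
    have := norm_le_gronwallBound_of_norm_deriv_right_le hyc hy' ha hbound t1
      ⟨ht1a, le_refl t1⟩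
    rw [gronwallBound_ε0] at this
    simp [hy] at this
    exact absurd this (by positivity)
  -- h tends to b - d > 0
  have hhlim : Filter.Tendsto h Filter.atTop (nhds (b - d)) := by
    have : Filter.Tendsto h Filter.atTop
        (nhds ((1 - 0) * ((a + d - b - c) * 0 + (b - d) - gbar * 0))) := by
      rw [hh]
      exact (Filter.Tendsto.sub tendsto_const_nhds hcontra).mul
        (((tendsto_const_nhds.mul hcontra).add tendsto_const_nhds).sub (hgain.mul hcontra))
    simpa using this
  have hev : ∀ᶠ t in Filter.atTop, 0 < h t :=
    hhlim.eventually (eventually_gt_nhds (by linarith))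
  obtain ⟨T0, hT0⟩ := Filter.eventually_atTop.1 hev
  set T : ℝ := max T0 0 with hT
  have hTnn : (0 : ℝ) ≤ T := le_max_right _ _
  have hTh : ∀ t, T ≤ t → 0 < h t := fun t ht => hT0 t (le_trans (le_max_left _ _) ht)
  -- x is strictly increasing on [T, ∞)
  have hmono : StrictMonoOn x (Set.Ici T) := by
    apply strictMonoOn_of_deriv_pos (convex_Ici T)
    · exact hxc.mono (fun s hs => le_trans hTnn hs)
    · intro t ht
      rw [interior_Ici] at ht
      have ht' : (0 : ℝ) ≤ t := le_trans hTnn (le_of_lt ht)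
      rw [(hderiv t ht').deriv]
      exact mul_pos (hpos t ht') (hTh t (le_of_lt ht))
  have hge : ∀ᶠ t in Filter.atTop, x T ≤ x t := by
    rw [Filter.eventually_atTop]
    refine ⟨T, fun t ht => ?_⟩
    rcases eq_or_lt_of_le ht with rfl | hlt
    · exact le_refl _
    · exact le_of_lt (hmono (Set.self_mem_Ici) (Set.mem_Ici.2 ht) hlt)
  have : x T ≤ 0 := ge_of_tendsto hcontra hge
  exact absurd this (not_le.2 (hpos T hTnn))
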